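/- Let n ≥ 3 and let C_n be the cycle graph on n vertices. Then the chromatic compound curling number of C_n equals n²/4 if n is even and (n−1)²/4 if n is odd. -/

import Mathlib

open SimpleGraph Finset

/-- A proper vertex colouring of `G` with colour set `Fin k`. -/
def IsProperColoring {V : Type*} (G : SimpleGraph V) {k : ℕ} (C : V → Fin k) : Prop :=
  ∀ ⦃v w⦄, G.Adj v w → C v ≠ C w

/-- The chromatic number of `G`, as a natural number. -/
noncomputable def chi {V : Type*} (G : SimpleGraph V) : ℕ :=
  G.chromaticNumber.toNat

/-- θ(cᵢ): the number of vertices receiving colour `i` under the colouring `C`. -/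
def theta {V : Type*} [Fintype V] {k : ℕ} (C : V → Fin k) (i : Fin k) : ℕ :=
  (Finset.univ.filter fun v => C v = i).card

/-- The list of colour class sizes of `C`, sorted in descending order. -/
def classSizesDesc {V : Type*} [Fintype V] {k : ℕ} (C : V → Fin k) : List ℕ :=
  (List.insertionSort (· ≤ ·) (List.ofFn fun i => theta C i)).reverse

/-- A χ⁻-colouring of `G`: a proper colouring with exactly χ(G) colours such that,
greedily, the colour class of `c₁` is as large as possible, then the colour class of
`c₂` is as large as possible among the remaining vertices, and so on; equivalently,
the descending sequence of colour class sizes is lexicographically maximal among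
all proper colourings with χ(G) colours. -/
def IsChiMinusColoring {V : Type*} [Fintype V] (G : SimpleGraph V)
    (C : V → Fin (chi G)) : Prop :=
  IsProperColoring G C ∧
    ∀ C' : V → Fin (chi G), IsProperColoring G C' →
      ¬ List.Lex (· < ·) (classSizesDesc C) (classSizesDesc C')

/-! ### Auxiliary lemmas -/

lemma val_one_of_two_le (n : ℕ) [NeZero n] (hn : 2 ≤ n) : (1 : Fin n).val = 1 := by
  simp [Fin.val_one', Nat.mod_eq_of_lt hn]

lemma cycle_val_succ {n : ℕ} [NeZero n] (hn : 2 ≤ n) (v : Fin n) :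
    (v + 1).val = (v.val + 1) % n := by
  rw [Fin.add_def, val_one_of_two_le n hn]

open Fin.CommRing in
lemma cycle_adj_iff {n : ℕ} [NeZero n] (hn : 2 ≤ n) {u v : Fin n} :
    (cycleGraph n).Adj u v ↔ u = v + 1 ∨ v = u + 1 := by
  rw [cycleGraph_adj']
  have h1 : (1 : Fin n).val = 1 := val_one_of_two_le n hn
  constructor
  · rintro (h | h)
    · left
      have h2 : u - v = 1 := Fin.ext (by rw [h, h1])
      rw [sub_eq_iff_eq_add.mp h2, add_comm]
    · right
      have h2 : v - u = 1 := Fin.ext (by rw [h, h1])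
      rw [sub_eq_iff_eq_add.mp h2, add_comm]
  · rintro (rfl | rfl)
    · left; rw [show v + 1 - v = 1 by ring, h1]
    · right; rw [show u + 1 - u = 1 by ring, h1]

open Fin.CommRing in
lemma cycle_adj_succ {n : ℕ} [NeZero n] (hn : 2 ≤ n) (v : Fin n) :
    (cycleGraph n).Adj v (v + 1) := by
  rw [cycleGraph_adj']
  right
  rw [show v + 1 - v = 1 by ring, val_one_of_two_le n hn]

lemma succ_key {n : ℕ} [NeZero n] (hn : 2 ≤ n) (u : Fin n) :
    ((u + 1).val = u.val + 1 ∧ u.val + 1 < n) ∨ (u.val = n - 1 ∧ (u + 1).val = 0) := by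
  rcases Nat.lt_or_ge (u.val + 1) n with h | h
  · exact Or.inl ⟨by rw [cycle_val_succ hn]; exact Nat.mod_eq_of_lt h, h⟩
  · right
    have hlt := u.isLt
    have h2 : u.val + 1 = n := by omega
    exact ⟨by omega, by rw [cycle_val_succ hn, h2, Nat.mod_self]⟩

lemma theta_sum {n k : ℕ} (C : Fin n → Fin k) : ∑ i, theta C i = n := by
  have := Finset.card_eq_sum_card_fiberwise (f := C) (s := univ) (t := univ)
    (fun x _ => mem_univ _)
  simpa [theta] using this.symm

lemma two_mul_theta_le {n k : ℕ} [NeZero n] (hn : 2 ≤ n) (C : Fin n → Fin k)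
    (hC : IsProperColoring (cycleGraph n) C) (i : Fin k) : 2 * theta C i ≤ n := by
  set S := univ.filter fun v => C v = i with hS
  have hdisj : Disjoint S (S.image (· + 1)) := by
    rw [Finset.disjoint_right]
    intro v hv hv2
    obtain ⟨s, hs, rfl⟩ := Finset.mem_image.mp hv
    have := hC (cycle_adj_succ hn s)
    rw [hS, mem_filter] at hs hv2
    exact this (hs.2.trans hv2.2.symm)
  have hcard : (S.image (· + 1)).card = S.card :=
    Finset.card_image_of_injective _ (add_left_injective 1)
  have := Finset.card_le_card (Finset.subset_univ (S ∪ S.image (· + 1)))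
  rw [Finset.card_union_of_disjoint hdisj, hcard, Finset.card_univ, Fintype.card_fin] at this
  simpa [theta, two_mul] using this

/-! ### Chromatic numbers -/

lemma two_le_chromaticNumber_cycle {n : ℕ} [NeZero n] (hn : 3 ≤ n) :
    2 ≤ (cycleGraph n).chromaticNumber := by
  by_contra h
  push_neg at h
  have h1 : (cycleGraph n).chromaticNumber ≤ 1 := Order.le_of_lt_add_one h
  obtain ⟨c⟩ := SimpleGraph.chromaticNumber_le_iff_colorable.mp h1
  have hadj : (cycleGraph n).Adj 0 1 :=
    (cycle_adj_iff (by omega)).mpr (Or.inr (zero_add 1).symm)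
  exact c.valid hadj (Subsingleton.elim _ _)

lemma chromaticNumber_cycle_even {n : ℕ} [NeZero n] (hn : 3 ≤ n) (he : Even n) :
    (cycleGraph n).chromaticNumber = 2 := by
  have hn2 : 2 ≤ n := by omega
  have hmod : n % 2 = 0 := Nat.even_iff.mp he
  have c2 : (cycleGraph n).Coloring (Fin 2) := by
    refine SimpleGraph.Coloring.mk (fun v => ⟨v.val % 2, by omega⟩) ?_
    intro u v hadj
    rcases (cycle_adj_iff hn2).mp hadj with rfl | rfl
    · rcases succ_key hn2 v with ⟨h1, h2⟩ | ⟨h1, h2⟩ <;>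
        (intro hcontra; rw [Fin.mk.injEq] at hcontra; omega)
    · rcases succ_key hn2 u with ⟨h1, h2⟩ | ⟨h1, h2⟩ <;>
        (intro hcontra; rw [Fin.mk.injEq] at hcontra; omega)
  refine le_antisymm ?_ (two_le_chromaticNumber_cycle hn)
  simpa using c2.colorable.chromaticNumber_le

open Fin.CommRing in
lemma cycle_walk {n : ℕ} [NeZero n] (hn : 2 ≤ n) (k : ℕ) :
    ∃ w : (cycleGraph n).Walk 0 (k : Fin n), w.length = k := by
  induction k with
  | zero => exact ⟨SimpleGraph.Walk.nil.copy rfl (by simp), by simp⟩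
  | succ k ih =>
    obtain ⟨w, hw⟩ := ih
    refine ⟨(w.concat (cycle_adj_succ hn _)).copy rfl (by push_cast; ring), ?_⟩
    simp [SimpleGraph.Walk.length_concat, hw]

open Fin.CommRing in
lemma three_le_chromaticNumber_cycle_odd {n : ℕ} [NeZero n] (hn : 3 ≤ n) (ho : Odd n) :
    3 ≤ (cycleGraph n).chromaticNumber := by
  obtain ⟨w, hw⟩ := cycle_walk (n := n) (by omega) n
  have h0 : ((n : ℕ) : Fin n) = 0 := Fin.natCast_self n
  exact SimpleGraph.Walk.three_le_chromaticNumber_of_odd_loop (w.copy rfl h0) (by simpa [hw])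

/-- The extremal proper 3-colouring of an odd cycle. -/
def oddColoring (n : ℕ) (v : Fin n) : Fin 3 :=
  if v.val = n - 1 then 2 else if v.val % 2 = 0 then 0 else 1

lemma oddColoring_proper {n : ℕ} [NeZero n] (hn : 3 ≤ n) (ho : Odd n) :
    IsProperColoring (cycleGraph n) (oddColoring n) := by
  have hn2 : 2 ≤ n := by omega
  have key : ∀ u : Fin n, oddColoring n u ≠ oddColoring n (u + 1) := by
    intro u
    have hmod : n % 2 = 1 := Nat.odd_iff.mp ho
    rcases succ_key hn2 u with ⟨h1, h2⟩ | ⟨h1, h2⟩ <;>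
      · unfold oddColoring
        rw [h1] at *
        split_ifs <;> first | decide | omega
  intro u v hadj
  rcases (cycle_adj_iff hn2).mp hadj with rfl | rfl
  · exact (key v).symm
  · exact key u

lemma chromaticNumber_cycle_odd {n : ℕ} [NeZero n] (hn : 3 ≤ n) (ho : Odd n) :
    (cycleGraph n).chromaticNumber = 3 := by
  refine le_antisymm ?_ (three_le_chromaticNumber_cycle_odd hn ho)
  simpa using (SimpleGraph.Coloring.mk (G := cycleGraph n) (oddColoring n)
    (fun {u v} h => oddColoring_proper hn ho h)).colorable.chromaticNumber_le

/-! ### Colour class sizes of the extremal odd colouring -/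

lemma card_filter_fin {n : ℕ} (p : ℕ → Prop) [DecidablePred p] :
    (univ.filter fun v : Fin n => p v.val).card = ((range n).filter p).card := by
  rw [Finset.card_filter, Finset.card_filter, ← Fin.sum_univ_eq_sum_range]

lemma theta_odd_zero {n m : ℕ} (hm : n = 2 * m + 1) : theta (oddColoring n) 0 = m := by
  unfold theta
  have h1 : (univ.filter fun v : Fin n => oddColoring n v = 0)
      = univ.filter fun v : Fin n => ¬(v.val = n - 1) ∧ v.val % 2 = 0 :=
    Finset.filter_congr fun v _ => by
      unfold oddColoring; split_ifs with ha hb <;> simp_all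
  rw [h1, card_filter_fin (fun x => ¬(x = n - 1) ∧ x % 2 = 0)]
  have h2 : ((range n).filter fun x => ¬(x = n - 1) ∧ x % 2 = 0)
      = (range m).image (2 * ·) := by
    ext x
    simp only [mem_filter, mem_range, mem_image]
    constructor
    · rintro ⟨hx, hne, hev⟩
      exact ⟨x / 2, by omega, by omega⟩
    · rintro ⟨a, ha, rfl⟩
      omega
  rw [h2, Finset.card_image_of_injective _ fun a b h => by omega, card_range]

lemma theta_odd_one {n m : ℕ} (hm : n = 2 * m + 1) : theta (oddColoring n) 1 = m := by
  unfold theta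
  have h1 : (univ.filter fun v : Fin n => oddColoring n v = 1)
      = univ.filter fun v : Fin n => ¬(v.val = n - 1) ∧ ¬(v.val % 2 = 0) :=
    Finset.filter_congr fun v _ => by
      unfold oddColoring; split_ifs with ha hb <;> simp_all
  rw [h1, card_filter_fin (fun x => ¬(x = n - 1) ∧ ¬(x % 2 = 0))]
  have h2 : ((range n).filter fun x => ¬(x = n - 1) ∧ ¬(x % 2 = 0))
      = (range m).image (fun a => 2 * a + 1) := by
    ext x
    simp only [mem_filter, mem_range, mem_image]
    constructor
    · rintro ⟨hx, hne, hod⟩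
      exact ⟨x / 2, by omega, by omega⟩
    · rintro ⟨a, ha, rfl⟩
      omega
  rw [h2, Finset.card_image_of_injective _ fun a b h => by omega, card_range]

lemma theta_odd_two {n m : ℕ} (hm : n = 2 * m + 1) : theta (oddColoring n) 2 = 1 := by
  unfold theta
  have h1 : (univ.filter fun v : Fin n => oddColoring n v = 2)
      = univ.filter fun v : Fin n => v.val = n - 1 :=
    Finset.filter_congr fun v _ => by
      unfold oddColoring; split_ifs with ha hb <;> simp_all
  rw [h1, card_filter_fin (fun x => x = n - 1)]
  have h2 : ((range n).filter fun x => x = n - 1) = {n - 1} := by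
    ext x
    simp only [mem_filter, mem_range, mem_singleton]
    omega
  rw [h2, card_singleton]

/-! ### List lemmas -/

lemma ofFn_three {V : Type*} [Fintype V] (C : V → Fin 3) :
    (List.ofFn fun i => theta C i) = [theta C 0, theta C 1, theta C 2] := by
  simp [List.ofFn_succ]

lemma prod_classSizes {V : Type*} [Fintype V] {k : ℕ} (C : V → Fin k) :
    (classSizesDesc C).prod = ∏ i, theta C i := by
  rw [classSizesDesc, List.prod_reverse,
    (List.perm_insertionSort _ _).prod_eq, List.prod_ofFn]

lemma classSizesDesc_oddColoring {n m : ℕ} (hm : n = 2 * m + 1) (hm1 : 1 ≤ m) :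
    classSizesDesc (oddColoring n) = [m, m, 1] := by
  rw [classSizesDesc, ofFn_three, theta_odd_zero hm, theta_odd_one hm, theta_odd_two hm]
  rcases Nat.lt_or_ge m 2 with h | h
  · have : m = 1 := by omega
    subst this
    decide
  · simp [List.insertionSort, List.orderedInsert, if_neg (by omega : ¬ m ≤ 1)]

/-! ### Main theorem -/

theorem cycleGraph_chromaticCompoundCurlingNumber (n : ℕ) (hn : 3 ≤ n)
    (C : Fin n → Fin (chi (cycleGraph n))) (hC : IsChiMinusColoring (cycleGraph n) C) :
    ∏ i, theta C i = if Even n then n ^ 2 / 4 else (n - 1) ^ 2 / 4 := by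
  haveI : NeZero n := ⟨by omega⟩
  have hn2 : 2 ≤ n := by omega
  obtain ⟨hprop, hmax⟩ := hC
  by_cases he : Even n
  · -- Even case: χ = 2 and both colour classes have exactly n/2 vertices.
    have hchi : chi (cycleGraph n) = 2 := by
      rw [chi, chromaticNumber_cycle_even hn he]; rfl
    rw [if_pos he]
    clear hmax
    revert C
    rw [hchi]
    intro C hprop
    have hb0 := two_mul_theta_le hn2 C hprop 0
    have hb1 := two_mul_theta_le hn2 C hprop 1
    have hsum := theta_sum C
    rw [Fin.sum_univ_two] at hsum
    rw [Fin.prod_univ_two]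
    obtain ⟨a, ha⟩ := he
    have h0 : theta C 0 = a := by omega
    have h1 : theta C 1 = a := by omega
    rw [h0, h1, ha, pow_two, show (a + a) * (a + a) = 4 * (a * a) by ring,
      Nat.mul_div_cancel_left _ (by norm_num)]
  · -- Odd case: χ = 3; the class sizes are forced to be m, m, 1 with n = 2m+1.
    have hodd : n % 2 = 1 := Nat.not_even_iff.mp he
    have ho : Odd n := Nat.odd_iff.mpr hodd
    have hchi : chi (cycleGraph n) = 3 := by
      rw [chi, chromaticNumber_cycle_odd hn ho]; rfl
    rw [if_neg he]
    revert C
    rw [hchi]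
    intro C hprop hmax
    obtain ⟨m, hm⟩ : ∃ m, n = 2 * m + 1 := ⟨n / 2, by omega⟩
    have hm1 : 1 ≤ m := by omega
    have hlex : ¬ List.Lex (· < ·) (classSizesDesc C) [m, m, 1] := by
      have := hmax (oddColoring n) (oddColoring_proper hn ho)
      rwa [classSizesDesc_oddColoring hm hm1] at this
    -- analyse the sorted list of class sizes of C
    have hb : ∀ i, theta C i ≤ m := fun i => by
      have := two_mul_theta_le hn2 C hprop i; omega
    have hsum := theta_sum C
    rw [Fin.sum_univ_three] at hsum
    set s := List.insertionSort (· ≤ ·) (List.ofFn fun i => theta C i) with hs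
    have hperm : s.Perm [theta C 0, theta C 1, theta C 2] :=
      (ofFn_three C) ▸ List.perm_insertionSort _ _
    have hlen : s.length = 3 := by rw [hperm.length_eq]; rfl
    obtain ⟨x, y, z, hxyz⟩ := List.length_eq_three.mp hlen
    have hsorted : s.Pairwise (· ≤ ·) := List.pairwise_insertionSort _ _
    rw [hxyz] at hsorted
    have hxy : x ≤ y := by
      simp only [List.pairwise_cons] at hsorted
      exact hsorted.1 y (by simp)
    have hyz : y ≤ z := by
      simp only [List.pairwise_cons] at hsorted
      exact hsorted.2.1 z (by simp)
    have hmem : ∀ w ∈ s, w ≤ m := by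
      intro w hw
      have := hperm.mem_iff.mp hw
      simp only [List.mem_cons, List.not_mem_nil, or_false] at this
      rcases this with rfl | rfl | rfl <;> exact hb _
    have hzm : z ≤ m := hmem z (by rw [hxyz]; simp)
    have hym : y ≤ m := hmem y (by rw [hxyz]; simp)
    have hsum' : x + y + z = n := by
      have h := hperm.sum_eq
      rw [hxyz] at h
      simp at h
      omega
    have hdesc : classSizesDesc C = [z, y, x] := by
      unfold classSizesDesc
      rw [← hs, hxyz]
      rfl
    rw [hdesc] at hlex
    have hz : z = m := by
      by_contra hne
      exact hlex (List.Lex.rel (by omega))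
    rw [hz] at hlex
    have hy : y = m := by
      by_contra hne
      exact hlex (List.Lex.cons (List.Lex.rel (by omega)))
    have hx : x = 1 := by omega
    have hprod : ∏ i, theta C i = m * m := by
      rw [← prod_classSizes, hdesc, hz, hy, hx]
      simp
    rw [hprod, hm, show 2 * m + 1 - 1 = 2 * m by omega, pow_two,
      show (2 * m) * (2 * m) = 4 * (m * m) by ring,
      Nat.mul_div_cancel_left _ (by norm_num)]
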